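/- arXiv:2603.29679 — 2 statements merged into one kernel-verified Lean document; each statement's English description precedes it below -/
import Mathlib

section
/- For every even integer r with 0 ≤ r ≤ N, the group O(2N,ℂ) acts transitively, via M ↦ g M gᵗ, on the set of complex antisymmetric 2N×2N matrices M satisfying M·M = 0 and rank(M) = r. -/
open scoped Matrix
open Matrix Module

section helpers
variable {n : ℕ}

lemma rank_add_le' {m k : Type*} [Fintype k] (A B : Matrix m k ℂ) :
    (A + B).rank ≤ A.rank + B.rank := by
  classical
  have hr : LinearMap.range (A + B).mulVecLin ≤
      LinearMap.range A.mulVecLin ⊔ LinearMap.range B.mulVecLin := by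
    rintro w ⟨v, rfl⟩
    exact Submodule.mem_sup.2 ⟨A.mulVecLin v, ⟨v, rfl⟩, B.mulVecLin v, ⟨v, rfl⟩, by
      simp [Matrix.mulVecLin, Matrix.add_mulVec]⟩
  calc (A + B).rank ≤ finrank ℂ ↥(LinearMap.range A.mulVecLin ⊔ LinearMap.range B.mulVecLin) :=
        Submodule.finrank_mono hr
    _ ≤ A.rank + B.rank := by
        have := Submodule.finrank_sup_add_finrank_inf_eq
          (LinearMap.range A.mulVecLin) (LinearMap.range B.mulVecLin)
        unfold Matrix.rank
        omega

lemma rank_vecMulVec_le' {m k : Type*} [Fintype k] (w : m → ℂ) (v : k → ℂ) :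
    (vecMulVec w v).rank ≤ 1 := by
  classical
  have hr : LinearMap.range (vecMulVec w v).mulVecLin ≤ Submodule.span ℂ {w} := by
    rintro x ⟨u, rfl⟩
    have : (vecMulVec w v).mulVecLin u = (v ⬝ᵥ u) • w := by
      ext i
      simp [Matrix.mulVecLin, Matrix.mulVec, vecMulVec_apply, dotProduct,
        Finset.mul_sum, mul_comm, mul_left_comm]
    rw [this]
    exact Submodule.smul_mem _ _ (Submodule.mem_span_singleton_self w)
  exact (Submodule.finrank_mono hr).trans (by
    simpa using finrank_span_le_card ({w} : Set (m → ℂ)))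

end helpers


lemma vecMulVec_mulVec {n : ℕ} (a b w : Fin n → ℂ) :
    vecMulVec a b *ᵥ w = (b ⬝ᵥ w) • a := by
  ext i
  simp [Matrix.mulVec, vecMulVec_apply, dotProduct, Finset.mul_sum, mul_comm, mul_left_comm,
    Finset.sum_mul]

lemma vecMulVec_transpose' {n : ℕ} (a b : Fin n → ℂ) :
    (vecMulVec a b)ᵀ = vecMulVec b a := by
  ext i j; simp [vecMulVec_apply, mul_comm]

lemma skew_decomp (k : ℕ) : ∀ {n : ℕ} (M : Matrix (Fin n) (Fin n) ℂ),
    Mᵀ = -M → M.rank = k →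
    ∃ (s : ℕ) (x y : Fin s → Fin n → ℂ), 2 * s = k ∧
      M = ∑ i, (vecMulVec (x i) (y i) - vecMulVec (y i) (x i)) := by
  induction k using Nat.strong_induction_on with
  | _ k ih =>
  intro n M hM hMr
  by_cases hM0 : M = 0
  · refine ⟨0, ![], ![], ?_, by simp [hM0]⟩
    simp [hM0] at hMr
    omega
  · have key : ∀ w₁ w₂ : Fin n → ℂ, (M *ᵥ w₁) ⬝ᵥ w₂ = -(w₁ ⬝ᵥ (M *ᵥ w₂)) := by
      intro w₁ w₂
      rw [dotProduct_comm, Matrix.dotProduct_mulVec, ← Matrix.mulVec_transpose, hM,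
        Matrix.neg_mulVec, neg_dotProduct, dotProduct_comm]
    have h1 : ∃ u v : Fin n → ℂ, v ⬝ᵥ (M *ᵥ u) = 1 := by
      have h2 : ∃ u, M *ᵥ u ≠ 0 := by
        by_contra h
        push_neg at h
        apply hM0
        ext i j
        have := congrFun (h (Pi.single j 1)) i
        simpa [Matrix.mulVec_single] using this
      obtain ⟨u, hu⟩ := h2
      obtain ⟨i, hi⟩ := Function.ne_iff.mp hu
      refine ⟨((M *ᵥ u) i)⁻¹ • u, Pi.single i 1, ?_⟩
      rw [Matrix.mulVec_smul]
      simp only [dotProduct_smul]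
      rw [dotProduct_comm, dotProduct_single]
      simp only [Pi.zero_apply] at hi
      field_simp
      rw [smul_eq_mul, one_div, inv_mul_cancel₀ hi]
    obtain ⟨u, v, huv⟩ := h1
    set a := M *ᵥ u with ha
    set b := M *ᵥ v with hb
    have hva : v ⬝ᵥ a = 1 := huv
    have hav : a ⬝ᵥ v = 1 := by rw [dotProduct_comm]; exact hva
    have hua : u ⬝ᵥ a = 0 := by
      have := key u u
      rw [dotProduct_comm] at this
      -- a ⬝ᵥ u = -(u ⬝ᵥ a) with a ⬝ᵥ u = u ⬝ᵥ a
      have h2 : u ⬝ᵥ a = -(u ⬝ᵥ a) := this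
      linear_combination (h2) / 2
    have hau : a ⬝ᵥ u = 0 := by rw [dotProduct_comm]; exact hua
    have hvb : v ⬝ᵥ b = 0 := by
      have := key v v
      rw [dotProduct_comm] at this
      have h2 : v ⬝ᵥ b = -(v ⬝ᵥ b) := this
      linear_combination (h2) / 2
    have hbv : b ⬝ᵥ v = 0 := by rw [dotProduct_comm]; exact hvb
    have hbu : b ⬝ᵥ u = -1 := by
      have := key v u
      rw [huv] at this
      rw [this]
    have hub : u ⬝ᵥ b = -1 := by rw [dotProduct_comm]; exact hbu
    set M₁ := M + vecMulVec a b - vecMulVec b a with hM₁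
    have hM₁skew : M₁ᵀ = -M₁ := by
      rw [hM₁]
      simp only [Matrix.transpose_sub, Matrix.transpose_add, hM, vecMulVec_transpose']
      abel
    have hmv : ∀ w, M₁ *ᵥ w = M *ᵥ w + (b ⬝ᵥ w) • a - (a ⬝ᵥ w) • b := by
      intro w
      rw [hM₁, Matrix.sub_mulVec, Matrix.add_mulVec, _root_.vecMulVec_mulVec, _root_.vecMulVec_mulVec]
    have hM₁u : M₁ *ᵥ u = 0 := by
      rw [hmv, hbu, hau]
      simp [← ha]
    have hM₁v : M₁ *ᵥ v = 0 := by
      rw [hmv, hbv, hav]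
      simp [← hb]
    have hker : ∀ w, M *ᵥ w = 0 → M₁ *ᵥ w = 0 := by
      intro w hw
      have h1 : b ⬝ᵥ w = 0 := by
        have := key v w
        rw [hw] at this
        simpa using this
      have h2 : a ⬝ᵥ w = 0 := by
        have := key u w
        rw [hw] at this
        simpa using this
      rw [hmv, hw, h1, h2]
      simp
    -- the span computation
    have hspan : ∀ p q : ℂ, M *ᵥ (p • u + q • v) = 0 → p = 0 ∧ q = 0 := by
      intro p q hw
      have hv' : v ⬝ᵥ (M *ᵥ (p • u + q • v)) = p := by
        rw [Matrix.mulVec_add, Matrix.mulVec_smul, Matrix.mulVec_smul]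
        simp [← ha, ← hb, hva, hvb]
      have hu' : u ⬝ᵥ (M *ᵥ (p • u + q • v)) = -q := by
        rw [Matrix.mulVec_add, Matrix.mulVec_smul, Matrix.mulVec_smul]
        simp [← ha, ← hb, hua, hub]
      rw [hw] at hv' hu'
      refine ⟨by simpa using hv'.symm, ?_⟩
      have hq : -q = 0 := by simpa using hu'.symm
      exact neg_eq_zero.mp hq
    classical
    have hindep : LinearIndependent ℂ ![u, v] := by
      rw [LinearIndependent.pair_iff]
      intro p q hpq
      exact hspan p q (by rw [hpq, Matrix.mulVec_zero])
    set S := Submodule.span ℂ (Set.range ![u, v]) with hS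
    have hrange : Set.range ![u, v] = {u, v} := by
      ext w
      simp [Fin.exists_fin_two]
      tauto
    have hSrank : finrank ℂ S = 2 := by
      rw [hS, finrank_span_eq_card hindep]
      simp
    have hSle : S ≤ LinearMap.ker M₁.mulVecLin := by
      rw [hS, Submodule.span_le]
      rintro w ⟨i, rfl⟩
      fin_cases i
      · simpa [LinearMap.mem_ker, Matrix.mulVecLin_apply] using hM₁u
      · simpa [LinearMap.mem_ker, Matrix.mulVecLin_apply] using hM₁v
    have hKle : LinearMap.ker M.mulVecLin ≤ LinearMap.ker M₁.mulVecLin := by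
      intro w hw
      simp only [LinearMap.mem_ker, Matrix.mulVecLin_apply] at hw ⊢
      exact hker w hw
    have hdisj : LinearMap.ker M.mulVecLin ⊓ S = ⊥ := by
      rw [Submodule.eq_bot_iff]
      rintro w ⟨hw1, hw2⟩
      rw [hS, hrange] at hw2
      obtain ⟨p, q, rfl⟩ := Submodule.mem_span_pair.mp hw2
      have hw1' : M *ᵥ (p • u + q • v) = 0 := hw1
      obtain ⟨hp, hq⟩ := hspan p q hw1'
      rw [hp, hq]
      simp
    have hle : LinearMap.ker M.mulVecLin ⊔ S ≤ LinearMap.ker M₁.mulVecLin :=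
      sup_le hKle hSle
    have hmono := Submodule.finrank_mono hle
    have hsum2 := Submodule.finrank_sup_add_finrank_inf_eq
      (LinearMap.ker M.mulVecLin) S
    rw [hdisj] at hsum2
    simp only [finrank_bot, add_zero] at hsum2
    have e1 := LinearMap.finrank_range_add_finrank_ker M.mulVecLin
    have e2 := LinearMap.finrank_range_add_finrank_ker M₁.mulVecLin
    have hpi : finrank ℂ (Fin n → ℂ) = n := by simp
    rw [hpi] at e1 e2
    have hrd : M.rank = finrank ℂ (LinearMap.range M.mulVecLin) := rfl
    have hrd1 : M₁.rank = finrank ℂ (LinearMap.range M₁.mulVecLin) := rfl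
    have hrankle : M.rank ≤ M₁.rank + 2 := by
      have h1 : M = M₁ + vecMulVec b a + vecMulVec (-a) b := by
        rw [hM₁]
        have : vecMulVec (-a) b = -vecMulVec a b := by
          ext i j; simp [vecMulVec_apply]
        rw [this]
        abel
      calc M.rank = (M₁ + vecMulVec b a + vecMulVec (-a) b).rank := by rw [← h1]
        _ ≤ (M₁ + vecMulVec b a).rank + (vecMulVec (-a) b).rank := rank_add_le' _ _
        _ ≤ (M₁.rank + (vecMulVec b a).rank) + 1 :=
            add_le_add (rank_add_le' _ _) (rank_vecMulVec_le' _ _)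
        _ ≤ (M₁.rank + 1) + 1 := by
            have := rank_vecMulVec_le' b a
            omega
        _ = M₁.rank + 2 := by ring
    obtain ⟨s₁, x₁, y₁, hs₁, hsum⟩ := ih M₁.rank (by omega) M₁ hM₁skew rfl
    refine ⟨s₁ + 1, Fin.snoc x₁ b, Fin.snoc y₁ a, by omega, ?_⟩
    rw [Fin.sum_univ_castSucc]
    simp only [Fin.snoc_castSucc, Fin.snoc_last]
    rw [← hsum, hM₁]
    abel


lemma exists_onb {n : ℕ} (k : ℕ) (U : Submodule ℂ (Fin n → ℂ)) (hU : finrank ℂ U = k)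
    (hnd : ∀ u ∈ U, (∀ v ∈ U, u ⬝ᵥ v = 0) → u = 0) :
    ∃ c : Fin k → (Fin n → ℂ), (∀ i, c i ∈ U) ∧
      ∀ i j, c i ⬝ᵥ c j = if i = j then 1 else 0 := by
  classical
  haveI : Invertible (2 : ℂ) := invertibleOfNonzero two_ne_zero
  let φ : LinearMap.BilinForm ℂ U :=
    LinearMap.mk₂ ℂ (fun u v : U => (u : Fin n → ℂ) ⬝ᵥ (v : Fin n → ℂ))
      (fun u u' v => by simp [add_dotProduct])
      (fun c u v => by simp [smul_dotProduct])
      (fun u v v' => by simp [dotProduct_add])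
      (fun c u v => by simp [dotProduct_smul])
  have hφ : ∀ u v : U, φ u v = (u : Fin n → ℂ) ⬝ᵥ (v : Fin n → ℂ) := fun u v => rfl
  have hsymm : φ.IsSymm := by
    refine ⟨fun u v => ?_⟩
    simp [hφ, dotProduct_comm]
  obtain ⟨v, hv⟩ := LinearMap.BilinForm.exists_orthogonal_basis (LinearMap.BilinForm.isSymm_iff.mp hsymm)
  let v' : Basis (Fin k) ℂ U := v.reindex (finCongr hU)
  have hv' : ∀ i j, i ≠ j → φ (v' i) (v' j) = 0 := by
    intro i j hij
    simp only [v', Module.Basis.reindex_apply]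
    exact hv (fun h => hij (by
      have := congrArg (finCongr hU) h
      simpa using this))
  have hdiag : ∀ i, φ (v' i) (v' i) ≠ 0 := by
    intro i hzero
    have hall : ∀ w ∈ U, ((v' i : Fin n → ℂ)) ⬝ᵥ w = 0 := by
      intro w hw
      have : ∀ j, φ (v' i) (v' j) = 0 := by
        intro j
        by_cases h : i = j
        · rw [← h]; exact hzero
        · exact hv' i j h
      -- express ⟨w, hw⟩ in basis v'
      have hrepr := Basis.sum_repr v' ⟨w, hw⟩
      have : φ (v' i) ⟨w, hw⟩ = 0 := by
        rw [← hrepr]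
        rw [map_sum]
        refine Finset.sum_eq_zero fun j _ => ?_
        rw [LinearMap.map_smul]
        simp [this j]
      simpa [hφ] using this
    have := hnd (v' i) (v' i).2 hall
    have hvz : (v' i : U) = 0 := Subtype.ext this
    exact Basis.ne_zero v' i hvz
  choose e he using fun i => IsAlgClosed.exists_pow_nat_eq (k := ℂ) (φ (v' i) (v' i)) (n := 2) (by norm_num)
  have he0 : ∀ i, e i ≠ 0 := by
    intro i h
    apply hdiag i
    rw [← he i, h]
    norm_num
  refine ⟨fun i => (e i)⁻¹ • ((v' i : Fin n → ℂ)), fun i => Submodule.smul_mem _ _ (v' i).2, ?_⟩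
  intro i j
  rw [smul_dotProduct, dotProduct_smul]
  by_cases h : i = j
  · subst h
    have : (v' i : Fin n → ℂ) ⬝ᵥ (v' i : Fin n → ℂ) = e i * e i := by
      rw [← hφ, ← he i]; ring
    rw [this, if_pos rfl]
    field_simp
    simp only [smul_eq_mul]
    field_simp
    exact div_self (he0 i)
  · have : (v' i : Fin n → ℂ) ⬝ᵥ (v' j : Fin n → ℂ) = 0 := by
      rw [← hφ]; exact hv' i j h
    simp [this, h]


abbrev rho (s : ℕ) := Fin s ⊕ Fin s
abbrev iot (s m : ℕ) := (rho s) ⊕ ((rho s) ⊕ Fin m)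

noncomputable def Amat (s : ℕ) : Matrix (rho s) (rho s) ℂ := fromBlocks 0 1 (-1) 0

noncomputable def Gmat (s m : ℕ) : Matrix (iot s m) (iot s m) ℂ :=
  fromBlocks 0 (fromCols 1 0) (fromRows 1 0) (fromBlocks 0 0 0 1)

noncomputable def Emat (s m : ℕ) : Matrix (iot s m) (rho s) ℂ := fromRows 1 0

noncomputable def Kmat (s m : ℕ) : Matrix (iot s m) (iot s m) ℂ :=
  Emat s m * Amat s * (Emat s m)ᵀ

lemma Amat_mul_Amat (s : ℕ) : Amat s * Amat s = -1 := by
  simp [Amat, fromBlocks_multiply, ← fromBlocks_one, fromBlocks_neg]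

lemma gram_fromColumns {q : Type*} [Fintype q] {α β : Type*} [Fintype α] [Fintype β]
    (A : Matrix q α ℂ) (B : Matrix q β ℂ) :
    (fromCols A B)ᵀ * fromCols A B =
      fromBlocks (Aᵀ * A) (Aᵀ * B) (Bᵀ * A) (Bᵀ * B) := by
  rw [transpose_fromCols, fromRows_mul, mul_fromCols, mul_fromCols,
    fromRows_fromCols_eq_fromBlocks]

lemma Gmat_mul_Gmat (s m : ℕ) : Gmat s m * Gmat s m = 1 := by
  rw [Gmat, fromBlocks_multiply]
  rw [fromCols_mul_fromRows, fromCols_mul_fromBlocks, fromBlocks_mul_fromRows,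
    fromRows_mul, fromBlocks_multiply]
  simp only [Matrix.mul_zero, Matrix.zero_mul, Matrix.one_mul, Matrix.mul_one,
    add_zero, zero_add, Matrix.fromCols_zero, Matrix.fromRows_zero]
  rw [fromRows_mul, Matrix.one_mul, Matrix.zero_mul, show (0 : Matrix (Fin m) (rho s ⊕ Fin m) ℂ) = fromCols 0 0 from (fromCols_zero).symm,
    fromRows_fromCols_eq_fromBlocks, fromBlocks_add]
  simp only [add_zero, zero_add]
  rw [fromBlocks_one, fromBlocks_one]

lemma card_iot (N s m : ℕ) (hm : 2 * s + (2 * s + m) = 2 * N) :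
    Fintype.card (iot s m) = Fintype.card (Fin (2 * N)) := by
  simp [Fintype.card_sum]
  omega

noncomputable def eqv (N s m : ℕ) (hm : 2 * s + (2 * s + m) = 2 * N) :
    Fin (2 * N) ≃ iot s m :=
  Fintype.equivOfCardEq (card_iot N s m hm).symm

noncomputable def G0 (N s m : ℕ) (hm : 2 * s + (2 * s + m) = 2 * N) :
    Matrix (Fin (2 * N)) (Fin (2 * N)) ℂ :=
  (Gmat s m).submatrix (eqv N s m hm) (eqv N s m hm)

noncomputable def K0 (N s m : ℕ) (hm : 2 * s + (2 * s + m) = 2 * N) :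
    Matrix (Fin (2 * N)) (Fin (2 * N)) ℂ :=
  (Kmat s m).submatrix (eqv N s m hm) (eqv N s m hm)

lemma G0_mul_G0 (N s m : ℕ) (hm : 2 * s + (2 * s + m) = 2 * N) :
    G0 N s m hm * G0 N s m hm = 1 := by
  rw [G0, show ((eqv N s m hm : Fin (2*N) → iot s m)) = ⇑(eqv N s m hm) from rfl]
  rw [Matrix.submatrix_mul_equiv (Gmat s m) (Gmat s m) _ (eqv N s m hm) _,
    Gmat_mul_Gmat, Matrix.submatrix_one_equiv]


lemma transpose_of_mul_of {n s : ℕ} (x y : Fin s → Fin n → ℂ) :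
    (Matrix.of x)ᵀ * (Matrix.of y) = ∑ i, vecMulVec (x i) (y i) := by
  ext p q
  simp [Matrix.mul_apply, vecMulVec_apply, Matrix.sum_apply]


lemma sum_elim_eq_zero_iff {α β γ : Type*} [Zero γ] (f : α → γ) (g : β → γ) :
    Sum.elim f g = 0 ↔ f = 0 ∧ g = 0 := by
  constructor
  · intro h
    exact ⟨funext fun a => congrFun h (Sum.inl a), funext fun b => congrFun h (Sum.inr b)⟩
  · rintro ⟨h1, h2⟩
    funext x
    cases x <;> simp [h1, h2]

lemma normal_form (N s m : ℕ) (hm : 2 * s + (2 * s + m) = 2 * N)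
    (M : Matrix (Fin (2 * N)) (Fin (2 * N)) ℂ) (hM : Mᵀ = -M) (hMsq : M * M = 0)
    (hMr : M.rank = 2 * s) :
    ∃ B : Matrix (Fin (2 * N)) (Fin (2 * N)) ℂ,
      IsUnit B.det ∧ Bᵀ * B = G0 N s m hm ∧ M = B * K0 N s m hm * Bᵀ := by
  classical
  obtain ⟨s', x, y, hs', hsum⟩ := skew_decomp (2 * s) M hM hMr
  have hss : s = s' := by omega
  subst hss
  set Z : Matrix (Fin (2 * N)) (rho s) ℂ :=
    fromCols ((Matrix.of x)ᵀ) ((Matrix.of y)ᵀ) with hZdef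
  have hZ : M = Z * Amat s * Zᵀ := by
    rw [hZdef, Amat, fromCols_mul_fromBlocks, transpose_fromCols,
      fromCols_mul_fromRows]
    simp only [Matrix.mul_zero, Matrix.mul_one, Matrix.mul_neg, zero_add, add_zero, Matrix.transpose_transpose, Matrix.neg_mul]
    rw [transpose_of_mul_of x y, transpose_of_mul_of y x, hsum]
    rw [Finset.sum_sub_distrib]
    abel
  have hcard : Fintype.card (rho s) = 2 * s := by simp; omega
  have hZrank : Z.rank = 2 * s := by
    refine le_antisymm (by simpa [hcard] using Z.rank_le_card_width) ?_
    have h1 : M.rank ≤ Z.rank := by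
      rw [hZ, Matrix.mul_assoc]
      exact Matrix.rank_mul_le_left _ _
    omega
  clear_value Z
  -- Z has a left inverse
  have hkerZ : LinearMap.ker Z.mulVecLin = ⊥ := by
    have e1 := LinearMap.finrank_range_add_finrank_ker Z.mulVecLin
    have hdom : finrank ℂ (rho s → ℂ) = 2 * s := by
      simp only [Module.finrank_pi]
      rw [hcard]
    rw [hdom] at e1
    have hr : finrank ℂ (LinearMap.range Z.mulVecLin) = 2 * s := hZrank
    have hk0 : finrank ℂ (LinearMap.ker Z.mulVecLin) = 0 := by omega
    exact Submodule.finrank_eq_zero.mp hk0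
  obtain ⟨gL, hgL⟩ := LinearMap.exists_leftInverse_of_injective Z.mulVecLin hkerZ
  set L := LinearMap.toMatrix' gL with hLdef
  have hLZ : L * Z = 1 := by
    have h2 := congrArg LinearMap.toMatrix' hgL
    rwa [LinearMap.toMatrix'_comp, show Z.mulVecLin = Matrix.toLin' Z from rfl,
      LinearMap.toMatrix'_toLin', LinearMap.toMatrix'_id] at h2
  have hZL : Zᵀ * Lᵀ = 1 := by
    rw [← Matrix.transpose_mul, hLZ, Matrix.transpose_one]
  have hZZ : Zᵀ * Z = 0 := by
    have h1 : Amat s * (Zᵀ * Z) * Amat s = L * (M * M) * Lᵀ := by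
      rw [hZ]
      rw [show Z * Amat s * Zᵀ * (Z * Amat s * Zᵀ) = Z * (Amat s * (Zᵀ * Z) * Amat s) * Zᵀ by
        simp only [Matrix.mul_assoc]]
      rw [show L * (Z * (Amat s * (Zᵀ * Z) * Amat s) * Zᵀ) * Lᵀ
            = (L * Z) * (Amat s * (Zᵀ * Z) * Amat s) * (Zᵀ * Lᵀ) by simp only [Matrix.mul_assoc],
        hLZ, hZL, Matrix.one_mul, Matrix.mul_one]
    have h0 : Amat s * (Zᵀ * Z) * Amat s = 0 := by
      rw [h1, hMsq]
      simp
    calc Zᵀ * Z = (Amat s * Amat s) * (Zᵀ * Z) * (Amat s * Amat s) := by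
          rw [Amat_mul_Amat]
          simp
      _ = Amat s * (Amat s * (Zᵀ * Z) * Amat s) * Amat s := by simp only [Matrix.mul_assoc]
      _ = 0 := by rw [h0]; simp
  -- dual frame
  have hsurjZt : LinearMap.range (Zᵀ).mulVecLin = ⊤ := by
    apply Submodule.eq_top_of_finrank_eq
    rw [show finrank ℂ (LinearMap.range (Zᵀ).mulVecLin) = (Zᵀ).rank from rfl,
      Matrix.rank_transpose, hZrank]
    simp only [Module.finrank_pi]
    rw [hcard]
  obtain ⟨gR, hgR⟩ := LinearMap.exists_rightInverse_of_surjective (Zᵀ).mulVecLin hsurjZt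
  set W₀ := LinearMap.toMatrix' gR with hW₀def
  have hZW₀ : Zᵀ * W₀ = 1 := by
    have h2 := congrArg LinearMap.toMatrix' hgR
    rwa [LinearMap.toMatrix'_comp, show (Zᵀ).mulVecLin = Matrix.toLin' Zᵀ from rfl,
      LinearMap.toMatrix'_toLin', LinearMap.toMatrix'_id] at h2
  have hW₀Z : W₀ᵀ * Z = 1 := by
    rw [show W₀ᵀ * Z = (Zᵀ * W₀)ᵀ by
      rw [Matrix.transpose_mul, Matrix.transpose_transpose], hZW₀, Matrix.transpose_one]
  set S := W₀ᵀ * W₀ with hSdef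
  have hSsymm : Sᵀ = S := by rw [hSdef, Matrix.transpose_mul, Matrix.transpose_transpose]
  set W := W₀ - (2⁻¹ : ℂ) • (Z * S) with hWdef
  have hZW : Zᵀ * W = 1 := by
    rw [hWdef, Matrix.mul_sub, Matrix.mul_smul, ← Matrix.mul_assoc, hZZ]
    simp [hZW₀]
  have hWZ : Wᵀ * Z = 1 := by
    rw [show Wᵀ * Z = (Zᵀ * W)ᵀ by
      rw [Matrix.transpose_mul, Matrix.transpose_transpose], hZW, Matrix.transpose_one]
  have hWW : Wᵀ * W = 0 := by
    have hWT : Wᵀ = W₀ᵀ - (2⁻¹ : ℂ) • (Sᵀ * Zᵀ) := by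
      rw [hWdef, Matrix.transpose_sub, Matrix.transpose_smul, Matrix.transpose_mul]
    rw [hWT, hWdef, Matrix.sub_mul, Matrix.mul_sub, Matrix.mul_sub]
    rw [Matrix.mul_smul, Matrix.smul_mul, Matrix.smul_mul, Matrix.mul_smul, smul_smul]
    rw [show Sᵀ * Zᵀ * (Z * S) = Sᵀ * (Zᵀ * Z) * S by simp only [Matrix.mul_assoc], hZZ]
    rw [show W₀ᵀ * (Z * S) = (W₀ᵀ * Z) * S by simp only [Matrix.mul_assoc], hW₀Z]
    rw [show Sᵀ * Zᵀ * W₀ = Sᵀ * (Zᵀ * W₀) by simp only [Matrix.mul_assoc], hZW₀, hSsymm]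
    rw [← hSdef]
    simp only [Matrix.one_mul, Matrix.mul_one, Matrix.mul_zero, Matrix.zero_mul, smul_zero,
      sub_zero]
    module
  clear_value W₀ S W
  -- the complement
  set F : Matrix (rho s ⊕ rho s) (Fin (2 * N)) ℂ := (fromCols Z W)ᵀ with hFdef
  have hFR : F * fromCols W Z = 1 := by
    rw [hFdef, transpose_fromCols, fromRows_mul, mul_fromCols, mul_fromCols,
      hZW, hZZ, hWW, hWZ, fromRows_fromCols_eq_fromBlocks, fromBlocks_one]
  have hUrange : LinearMap.range F.mulVecLin = ⊤ := by
    rw [LinearMap.range_eq_top]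
    intro yv
    refine ⟨(fromCols W Z).mulVec yv, ?_⟩
    rw [Matrix.mulVecLin_apply, Matrix.mulVec_mulVec, hFR, Matrix.one_mulVec]
  set U := LinearMap.ker F.mulVecLin with hUdef
  have hUrank : finrank ℂ U = m := by
    rw [hUdef]
    have e1 := LinearMap.finrank_range_add_finrank_ker F.mulVecLin
    rw [hUrange, finrank_top] at e1
    have h2 : finrank ℂ (Fin (2 * N) → ℂ) = 2 * N := by simp
    have h3 : finrank ℂ (rho s ⊕ rho s → ℂ) = 2 * s + 2 * s := by
      simp only [Module.finrank_pi, Fintype.card_sum, Fintype.card_fin]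
      omega
    rw [h2, h3] at e1
    omega
  have hmemU : ∀ u, u ∈ U ↔ (Zᵀ *ᵥ u = 0 ∧ Wᵀ *ᵥ u = 0) := by
    intro u
    rw [hUdef, LinearMap.mem_ker, Matrix.mulVecLin_apply, hFdef, transpose_fromCols,
      fromRows_mulVec]
    constructor
    · intro h
      exact ⟨funext fun a1 => congrFun h (Sum.inl a1), funext fun b1 => congrFun h (Sum.inr b1)⟩
    · rintro ⟨h1, h2⟩
      funext z
      cases z with
      | inl a1 => simpa using congrFun h1 a1
      | inr b1 => simpa using congrFun h2 b1
  set P : Matrix (Fin (2 * N)) (Fin (2 * N)) ℂ := Z * Wᵀ + W * Zᵀ with hPdef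
  have hZQ : Zᵀ * (1 - P) = 0 := by
    rw [hPdef, Matrix.mul_sub, Matrix.mul_one, Matrix.mul_add, ← Matrix.mul_assoc,
      ← Matrix.mul_assoc, hZZ, hZW]
    simp
  have hWQ : Wᵀ * (1 - P) = 0 := by
    rw [hPdef, Matrix.mul_sub, Matrix.mul_one, Matrix.mul_add, ← Matrix.mul_assoc,
      ← Matrix.mul_assoc, hWW, hWZ]
    simp
  have hnd : ∀ u ∈ U, (∀ v ∈ U, u ⬝ᵥ v = 0) → u = 0 := by
    intro u hu hop
    obtain ⟨huZ, huW⟩ := (hmemU u).mp hu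
    have huvZ : u ᵥ* Z = 0 := by rw [← Matrix.mulVec_transpose]; exact huZ
    have huvW : u ᵥ* W = 0 := by rw [← Matrix.mulVec_transpose]; exact huW
    funext i
    have hw : u ⬝ᵥ Pi.single i 1 = 0 := by
      set w : Fin (2 * N) → ℂ := Pi.single i 1 with hwdef
      have hdec : u ⬝ᵥ w = u ⬝ᵥ (P *ᵥ w) + u ⬝ᵥ ((1 - P) *ᵥ w) := by
        rw [← dotProduct_add, ← Matrix.add_mulVec, add_sub_cancel, Matrix.one_mulVec]
      have h1 : u ⬝ᵥ (P *ᵥ w) = 0 := by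
        rw [hPdef, Matrix.add_mulVec, dotProduct_add, ← Matrix.mulVec_mulVec,
          ← Matrix.mulVec_mulVec, Matrix.dotProduct_mulVec u Z _, Matrix.dotProduct_mulVec u W _,
          huvZ, huvW]
        simp
      have h2 : u ⬝ᵥ ((1 - P) *ᵥ w) = 0 := by
        refine hop _ ((hmemU _).mpr ⟨?_, ?_⟩)
        · rw [Matrix.mulVec_mulVec, hZQ, Matrix.zero_mulVec]
        · rw [Matrix.mulVec_mulVec, hWQ, Matrix.zero_mulVec]
      rw [hdec, h1, h2, add_zero]
    simpa using hw
  obtain ⟨c, hcU, hcdot⟩ := exists_onb m U hUrank hnd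
  set C : Matrix (Fin (2 * N)) (Fin m) ℂ := (Matrix.of c)ᵀ with hCdef
  have hZC : Zᵀ * C = 0 := by
    ext q k
    have hk := ((hmemU (c k)).mp (hcU k)).1
    calc (Zᵀ * C) q k = ∑ j, Zᵀ q j * c k j := by
          simp [hCdef, Matrix.mul_apply]
      _ = (Zᵀ *ᵥ c k) q := by simp [Matrix.mulVec, dotProduct]
      _ = 0 := by rw [hk]; rfl
  have hWC : Wᵀ * C = 0 := by
    ext q k
    have hk := ((hmemU (c k)).mp (hcU k)).2
    calc (Wᵀ * C) q k = ∑ j, Wᵀ q j * c k j := by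
          simp [hCdef, Matrix.mul_apply]
      _ = (Wᵀ *ᵥ c k) q := by simp [Matrix.mulVec, dotProduct]
      _ = 0 := by rw [hk]; rfl
  have hCC : Cᵀ * C = 1 := by
    ext k l
    calc (Cᵀ * C) k l = ∑ j, c k j * c l j := by
          simp [hCdef, Matrix.mul_apply]
      _ = c k ⬝ᵥ c l := by simp [dotProduct]
      _ = (1 : Matrix (Fin m) (Fin m) ℂ) k l := by rw [hcdot k l, Matrix.one_apply]
  clear_value C
  have hCZ : Cᵀ * Z = 0 := by
    rw [show Cᵀ * Z = (Zᵀ * C)ᵀ by rw [Matrix.transpose_mul, Matrix.transpose_transpose], hZC,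
      Matrix.transpose_zero]
  have hCW : Cᵀ * W = 0 := by
    rw [show Cᵀ * W = (Wᵀ * C)ᵀ by rw [Matrix.transpose_mul, Matrix.transpose_transpose], hWC,
      Matrix.transpose_zero]
  -- assemble
  set Btil : Matrix (Fin (2 * N)) (iot s m) ℂ := fromCols Z (fromCols W C) with hBtil
  have hZWC : Zᵀ * fromCols W C = fromCols (1 : Matrix (rho s) (rho s) ℂ) 0 := by
    rw [mul_fromCols, hZW, hZC]
  have hWCZ : (fromCols W C)ᵀ * Z = fromRows (1 : Matrix (rho s) (rho s) ℂ) 0 := by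
    rw [transpose_fromCols, fromRows_mul, hWZ, hCZ]
  have hWCWC : (fromCols W C)ᵀ * fromCols W C =
      fromBlocks (0 : Matrix (rho s) (rho s) ℂ) 0 0 1 := by
    rw [gram_fromColumns, hWW, hWC, hCW, hCC]
  have hGram : Btilᵀ * Btil = Gmat s m := by
    rw [hBtil, gram_fromColumns, hZZ, hZWC, hWCZ, hWCWC, Gmat]
  have hBtilE : Btil * Emat s m = Z := by
    rw [hBtil, Emat, fromCols_mul_fromRows, Matrix.mul_one, Matrix.mul_zero, add_zero]
  clear_value Btil
  set e := eqv N s m hm with he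
  have hBB : (Btil.submatrix id ⇑e)ᵀ * Btil.submatrix id ⇑e = G0 N s m hm := by
    rw [Matrix.transpose_submatrix,
      ← Matrix.submatrix_mul Btilᵀ Btil ⇑e id ⇑e Function.bijective_id,
      hGram, G0, he]
  refine ⟨Btil.submatrix id ⇑e, ?_, hBB, ?_⟩
  · -- IsUnit det
    have hdetG : G0 N s m hm * G0 N s m hm = 1 := G0_mul_G0 N s m hm
    have h1 : (Btil.submatrix id ⇑e).det ^ 2 = (G0 N s m hm).det := by
      rw [← hBB, Matrix.det_mul, Matrix.det_transpose]
      ring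
    have h2 : (G0 N s m hm).det ^ 2 = 1 := by
      rw [sq, ← Matrix.det_mul, hdetG, Matrix.det_one]
    refine IsUnit.of_mul_eq_one ((Btil.submatrix id ⇑e).det ^ 3) ?_
    calc (Btil.submatrix id ⇑e).det * (Btil.submatrix id ⇑e).det ^ 3
        = ((Btil.submatrix id ⇑e).det ^ 2) ^ 2 := by ring
      _ = 1 := by rw [h1, h2]
  · rw [K0, ← he, Matrix.transpose_submatrix,
      Matrix.submatrix_mul_equiv Btil (Kmat s m) id e ⇑e,
      Matrix.submatrix_mul_equiv (Btil * Kmat s m) Btilᵀ id e id,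
      Matrix.submatrix_id_id]
    rw [Kmat, show Btil * (Emat s m * Amat s * (Emat s m)ᵀ) * Btilᵀ
        = (Btil * Emat s m) * Amat s * (Btil * Emat s m)ᵀ by
      rw [Matrix.transpose_mul]
      simp only [Matrix.mul_assoc]]
    rw [hBtilE, ← hZ]

/-- `O(2N, ℂ)` acts transitively (via `M ↦ g M gᵗ`) on square-zero antisymmetric complex
`2N × 2N` matrices of any fixed even rank `r ≤ N`. -/
theorem orthogonal_transitive_on_sq_zero_antisymm
    (N r : ℕ) (hr : Even r) (hrN : r ≤ N)
    (M M' : Matrix (Fin (2 * N)) (Fin (2 * N)) ℂ)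
    (hM : M.transpose = -M) (hMsq : M * M = 0) (hMr : M.rank = r)
    (hM' : M'.transpose = -M') (hM'sq : M' * M' = 0) (hM'r : M'.rank = r) :
    ∃ g : Matrix (Fin (2 * N)) (Fin (2 * N)) ℂ,
      g.transpose * g = 1 ∧ M' = g * M * g.transpose := by
  classical
  obtain ⟨s, hs⟩ := hr
  set m := 2 * N - (2 * s + 2 * s) with hmdef
  have hm : 2 * s + (2 * s + m) = 2 * N := by omega
  obtain ⟨B, hBdet, hBB, hBM⟩ := normal_form N s m hm M hM hMsq (by omega)
  obtain ⟨B', hB'det, hB'B', hB'M⟩ := normal_form N s m hm M' hM' hM'sq (by omega)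
  have h1 : B⁻¹ * B = 1 := Matrix.nonsing_inv_mul B hBdet
  have h2 : B * B⁻¹ = 1 := Matrix.mul_nonsing_inv B hBdet
  refine ⟨B' * B⁻¹, ?_, ?_⟩
  · calc (B' * B⁻¹)ᵀ * (B' * B⁻¹)
        = (B⁻¹)ᵀ * (B'ᵀ * B') * B⁻¹ := by
          rw [Matrix.transpose_mul]
          simp only [Matrix.mul_assoc]
      _ = (B⁻¹)ᵀ * (Bᵀ * B) * B⁻¹ := by rw [hB'B', hBB]
      _ = ((B⁻¹)ᵀ * Bᵀ) * (B * B⁻¹) := by simp only [Matrix.mul_assoc]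
      _ = 1 := by
          rw [← Matrix.transpose_mul, h2, Matrix.transpose_one, Matrix.mul_one]
  · rw [hB'M, hBM]
    calc B' * K0 N s m hm * B'ᵀ
        = B' * (B⁻¹ * B) * K0 N s m hm * ((B⁻¹ * B)ᵀ * B'ᵀ) := by
          rw [h1, Matrix.transpose_one, Matrix.mul_one, Matrix.one_mul]
      _ = B' * B⁻¹ * (B * K0 N s m hm * Bᵀ) * (B' * B⁻¹)ᵀ := by
          rw [Matrix.transpose_mul B' B⁻¹, Matrix.transpose_mul B⁻¹ B]
          simp only [Matrix.mul_assoc]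
end

section
/- For every even integer r with 0 ≤ r < N, the group SO(2N,ℂ) acts transitively, via M ↦ g M gᵗ, on the set of complex antisymmetric 2N×2N matrices M satisfying M·M = 0 and rank(M) = r; i.e. any two square-zero antisymmetric matrices of equal rank strictly less than N are SO(2N,ℂ)-conjugate. -/
open Matrix
open scoped Matrix

namespace SOTrans

lemma dot_sum {n k : ℕ} (v : Fin n → ℂ) (f : Fin k → (Fin n → ℂ)) :
    v ⬝ᵥ (∑ j, f j) = ∑ j, v ⬝ᵥ f j := by
  simp only [dotProduct, Finset.sum_apply, Finset.mul_sum]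
  rw [Finset.sum_comm]

variable {N : ℕ} {M : Matrix (Fin (2 * N)) (Fin (2 * N)) ℂ}

/-- skew symmetry pairing identity -/
lemma skew_dot (hM : M.transpose = -M) (v w : Fin (2 * N) → ℂ) :
    (M *ᵥ v) ⬝ᵥ w = -(v ⬝ᵥ (M *ᵥ w)) := by
  rw [dotProduct_comm, dotProduct_mulVec, ← mulVec_transpose, hM, neg_mulVec, neg_dotProduct,
    dotProduct_comm]

lemma self_dot_mulVec (hM : M.transpose = -M) (v : Fin (2 * N) → ℂ) :
    v ⬝ᵥ (M *ᵥ v) = 0 := by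
  have h := skew_dot hM v v
  rw [dotProduct_comm (M *ᵥ v) v] at h
  linear_combination h / 2

lemma mulVec_mulVec_zero (hMsq : M * M = 0) (v : Fin (2 * N) → ℂ) :
    M *ᵥ (M *ᵥ v) = 0 := by
  rw [Matrix.mulVec_mulVec, hMsq, Matrix.zero_mulVec]

lemma mulVec_dot_mulVec (hM : M.transpose = -M) (hMsq : M * M = 0) (v w : Fin (2 * N) → ℂ) :
    (M *ᵥ v) ⬝ᵥ (M *ᵥ w) = 0 := by
  rw [skew_dot hM, mulVec_mulVec_zero hMsq, dotProduct_zero, neg_zero]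

/-- A system of `k` standard hyperbolic quadruples adapted to `M`. -/
structure Quads (N k : ℕ) (M : Matrix (Fin (2 * N)) (Fin (2 * N)) ℂ) where
  x : Fin k → (Fin (2 * N) → ℂ)
  y : Fin k → (Fin (2 * N) → ℂ)
  u : Fin k → (Fin (2 * N) → ℂ)
  w : Fin k → (Fin (2 * N) → ℂ)
  hux : ∀ j, M *ᵥ (x j) = u j
  hwy : ∀ j, M *ᵥ (y j) = w j
  hxx : ∀ i j, x i ⬝ᵥ x j = 0
  hxy : ∀ i j, x i ⬝ᵥ y j = 0
  hxu : ∀ i j, x i ⬝ᵥ u j = 0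
  hxw : ∀ i j, x i ⬝ᵥ w j = if i = j then 1 else 0
  hyy : ∀ i j, y i ⬝ᵥ y j = 0
  hyu : ∀ i j, y i ⬝ᵥ u j = if i = j then -1 else 0
  hyw : ∀ i j, y i ⬝ᵥ w j = 0
  huu : ∀ i j, u i ⬝ᵥ u j = 0
  huw : ∀ i j, u i ⬝ᵥ w j = 0
  hww : ∀ i j, w i ⬝ᵥ w j = 0

namespace Quads

variable {k : ℕ} (Q : Quads N k M)

/-- membership in the orthogonal complement of the span of the quadruples -/
def inK (v : Fin (2 * N) → ℂ) : Prop :=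
  ∀ j, Q.x j ⬝ᵥ v = 0 ∧ Q.y j ⬝ᵥ v = 0 ∧ Q.u j ⬝ᵥ v = 0 ∧ Q.w j ⬝ᵥ v = 0

lemma hyx (i j) : Q.y i ⬝ᵥ Q.x j = 0 := by rw [dotProduct_comm]; exact Q.hxy j i
lemma hux' (i j) : Q.u i ⬝ᵥ Q.x j = 0 := by rw [dotProduct_comm]; exact Q.hxu j i
lemma hwx (i j) : Q.w i ⬝ᵥ Q.x j = if i = j then 1 else 0 := by
  rw [dotProduct_comm, Q.hxw j i]; simp [eq_comm]
lemma huy (i j) : Q.u i ⬝ᵥ Q.y j = if i = j then -1 else 0 := by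
  rw [dotProduct_comm, Q.hyu j i]; simp [eq_comm]
lemma hwy' (i j) : Q.w i ⬝ᵥ Q.y j = 0 := by rw [dotProduct_comm]; exact Q.hyw j i
lemma hwu (i j) : Q.w i ⬝ᵥ Q.u j = 0 := by rw [dotProduct_comm]; exact Q.huw j i

lemma hMu (hMsq : M * M = 0) (j : Fin k) : M *ᵥ Q.u j = 0 := by
  rw [← Q.hux, mulVec_mulVec_zero hMsq]

lemma hMw (hMsq : M * M = 0) (j : Fin k) : M *ᵥ Q.w j = 0 := by
  rw [← Q.hwy, mulVec_mulVec_zero hMsq]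

/-- the projection of any vector onto the span of the quadruples -/
noncomputable def proj (t : Fin (2 * N) → ℂ) : Fin (2 * N) → ℂ :=
  ∑ j, ((Q.w j ⬝ᵥ t) • Q.x j + (Q.x j ⬝ᵥ t) • Q.w j
    - (Q.u j ⬝ᵥ t) • Q.y j - (Q.y j ⬝ᵥ t) • Q.u j)

lemma dot_proj (v t : Fin (2 * N) → ℂ) : v ⬝ᵥ Q.proj t =
    ∑ j', ((Q.w j' ⬝ᵥ t) * (v ⬝ᵥ Q.x j') + (Q.x j' ⬝ᵥ t) * (v ⬝ᵥ Q.w j')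
      - (Q.u j' ⬝ᵥ t) * (v ⬝ᵥ Q.y j') - (Q.y j' ⬝ᵥ t) * (v ⬝ᵥ Q.u j')) := by
  rw [proj, dot_sum]
  refine Finset.sum_congr rfl fun j' _ => ?_
  simp [dotProduct_add, dotProduct_sub, dotProduct_smul, smul_eq_mul]

lemma inK_sub_proj (t : Fin (2 * N) → ℂ) : Q.inK (t - Q.proj t) := by
  intro j
  refine ⟨?_, ?_, ?_, ?_⟩ <;>
  · rw [dotProduct_sub, dot_proj]
    simp [Q.hxx, Q.hxy, Q.hxu, Q.hxw, Q.hyy, Q.hyu, Q.hyw, Q.huu, Q.huw, Q.hww,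
      Q.hyx, Q.hux', Q.hwx, Q.huy, Q.hwy', Q.hwu,
      dotProduct_comm _ t, mul_ite, Finset.sum_ite_eq, Finset.sum_ite_eq']

end Quads

end SOTrans

namespace SOTrans
namespace Quads
variable {N : ℕ} {M : Matrix (Fin (2 * N)) (Fin (2 * N)) ℂ} {k : ℕ} (Q : Quads N k M)

lemma dot_eq_zero_of_perp {z : Fin (2 * N) → ℂ} (hz : Q.inK z)
    (t : Fin (2 * N) → ℂ) (h : z ⬝ᵥ (t - Q.proj t) = 0) : z ⬝ᵥ t = 0 := by
  rw [dotProduct_sub, sub_eq_zero] at h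
  rw [h, dot_proj]
  refine Finset.sum_eq_zero fun j' _ => ?_
  have h1 := (hz j').1
  have h2 := (hz j').2.1
  have h3 := (hz j').2.2.1
  have h4 := (hz j').2.2.2
  rw [dotProduct_comm] at h1 h2 h3 h4
  rw [h1, h2, h3, h4]
  ring

lemma eq_zero_of_perp {z : Fin (2 * N) → ℂ} (hz : Q.inK z)
    (hperp : ∀ v, Q.inK v → z ⬝ᵥ v = 0) : z = 0 := by
  funext i
  have h := Q.dot_eq_zero_of_perp hz (Pi.single i 1)
    (hperp _ (Q.inK_sub_proj (Pi.single i 1)))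
  rw [dotProduct_single, mul_one] at h
  exact h

lemma inK_add {v w : Fin (2 * N) → ℂ} (hv : Q.inK v) (hw : Q.inK w) : Q.inK (v + w) := by
  intro j
  obtain ⟨a1, a2, a3, a4⟩ := hv j
  obtain ⟨b1, b2, b3, b4⟩ := hw j
  refine ⟨?_, ?_, ?_, ?_⟩ <;> simp [dotProduct_add, *]

lemma inK_smul {v : Fin (2 * N) → ℂ} (c : ℂ) (hv : Q.inK v) : Q.inK (c • v) := by
  intro j
  obtain ⟨a1, a2, a3, a4⟩ := hv j
  refine ⟨?_, ?_, ?_, ?_⟩ <;> simp [dotProduct_smul, *]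

lemma inK_sub {v w : Fin (2 * N) → ℂ} (hv : Q.inK v) (hw : Q.inK w) : Q.inK (v - w) := by
  intro j
  obtain ⟨a1, a2, a3, a4⟩ := hv j
  obtain ⟨b1, b2, b3, b4⟩ := hw j
  refine ⟨?_, ?_, ?_, ?_⟩ <;> simp [dotProduct_sub, *]

lemma inK_mulVec (hM : M.transpose = -M) (hMsq : M * M = 0) {v : Fin (2 * N) → ℂ}
    (hv : Q.inK v) : Q.inK (M *ᵥ v) := by
  intro j
  obtain ⟨a1, a2, a3, a4⟩ := hv j
  have e : ∀ t : Fin (2 * N) → ℂ, t ⬝ᵥ (M *ᵥ v) = -((M *ᵥ t) ⬝ᵥ v) := by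
    intro t; rw [skew_dot hM]; ring
  refine ⟨?_, ?_, ?_, ?_⟩ <;> rw [e]
  · rw [Q.hux j, a3, neg_zero]
  · rw [Q.hwy j, a4, neg_zero]
  · rw [Q.hMu hMsq j, zero_dotProduct, neg_zero]
  · rw [Q.hMw hMsq j, zero_dotProduct, neg_zero]

lemma mulVec_sum {n m k : ℕ} (A : Matrix (Fin n) (Fin m) ℂ) (f : Fin k → (Fin m → ℂ)) :
    A *ᵥ (∑ j, f j) = ∑ j, A *ᵥ f j := by
  rw [← mulVecLin_apply, map_sum]
  simp [mulVecLin_apply]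

lemma rank_le_of_MK_zero (hMsq : M * M = 0)
    (h0 : ∀ v, Q.inK v → M *ᵥ v = 0) : M.rank ≤ 2 * k := by
  have key : ∀ t, M *ᵥ t = ∑ j, ((Q.w j ⬝ᵥ t) • Q.u j - (Q.u j ⬝ᵥ t) • Q.w j) := by
    intro t
    have h1 : M *ᵥ (t - Q.proj t) = 0 := h0 _ (Q.inK_sub_proj t)
    rw [mulVec_sub, sub_eq_zero] at h1
    rw [h1, proj, mulVec_sum]
    refine Finset.sum_congr rfl fun j _ => ?_
    rw [mulVec_sub, mulVec_sub, mulVec_add, mulVec_smul, mulVec_smul, mulVec_smul, mulVec_smul,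
      Q.hux, Q.hwy, Q.hMu hMsq, Q.hMw hMsq, smul_zero, smul_zero, sub_zero]
    abel
  have hle : LinearMap.range M.mulVecLin ≤
      Submodule.span ℂ (Set.range (Sum.elim Q.u Q.w : Fin k ⊕ Fin k → Fin (2 * N) → ℂ)) := by
    rintro _ ⟨t, rfl⟩
    rw [mulVecLin_apply, key]
    refine Submodule.sum_mem _ fun j _ => ?_
    refine Submodule.sub_mem _ (Submodule.smul_mem _ _ ?_) (Submodule.smul_mem _ _ ?_)
    · exact Submodule.subset_span ⟨Sum.inl j, rfl⟩
    · exact Submodule.subset_span ⟨Sum.inr j, rfl⟩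
  calc M.rank = Module.finrank ℂ (LinearMap.range M.mulVecLin) := rfl
    _ ≤ Module.finrank ℂ (Submodule.span ℂ
        (Set.range (Sum.elim Q.u Q.w : Fin k ⊕ Fin k → Fin (2 * N) → ℂ))) :=
        Submodule.finrank_mono hle
    _ ≤ (Set.range (Sum.elim Q.u Q.w : Fin k ⊕ Fin k → Fin (2 * N) → ℂ)).toFinset.card :=
        finrank_span_le_card _
    _ ≤ Fintype.card (Fin k ⊕ Fin k) := by
        rw [Set.toFinset_range]
        exact Finset.card_image_le.trans (by simp)
    _ = 2 * k := by simp [Fintype.card_sum]; ring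

lemma rank_ge_of_exists (hM : M.transpose = -M) (hMsq : M * M = 0)
    {v : Fin (2 * N) → ℂ} (hv : Q.inK v) (hMv : M *ᵥ v ≠ 0) : 2 * k + 1 ≤ M.rank := by
  set G : (Fin k ⊕ Fin k) ⊕ Unit → (Fin (2 * N) → ℂ) :=
    Sum.elim (Sum.elim Q.u Q.w) (fun _ => M *ᵥ v) with hG
  have hdotMv : ∀ i, Q.x i ⬝ᵥ (M *ᵥ v) = 0 ∧ Q.y i ⬝ᵥ (M *ᵥ v) = 0 := by
    intro i
    have hK := Q.inK_mulVec hM hMsq hv i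
    exact ⟨hK.1, hK.2.1⟩
  have hli : LinearIndependent ℂ G := by
    rw [Fintype.linearIndependent_iff]
    intro g hg
    have dotted : ∀ t : Fin (2 * N) → ℂ,
        ∑ idx, g idx * (t ⬝ᵥ G idx) = 0 := by
      intro t
      have := congrArg (fun z => t ⬝ᵥ z) hg
      simpa [dot_sum, dotProduct_smul, smul_eq_mul, mul_comm] using this
    have h1 : ∀ i, g (Sum.inl (Sum.inl i)) = 0 := by
      intro i
      have := dotted (Q.y i)
      rw [Fintype.sum_sum_type, Fintype.sum_sum_type] at this
      simp only [hG, Sum.elim_inl, Sum.elim_inr, Q.hyu, Q.hyw, (hdotMv i).2, mul_ite,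
        mul_zero, mul_one, mul_neg, Finset.sum_ite_eq', Finset.mem_univ, if_true] at this
      simpa using this
    have h2 : ∀ i, g (Sum.inl (Sum.inr i)) = 0 := by
      intro i
      have := dotted (Q.x i)
      rw [Fintype.sum_sum_type, Fintype.sum_sum_type] at this
      simp only [hG, Sum.elim_inl, Sum.elim_inr, Q.hxu, Q.hxw, (hdotMv i).1, mul_ite,
        mul_zero, mul_one, Finset.sum_ite_eq', Finset.mem_univ, if_true] at this
      simpa using this
    have h3 : g (Sum.inr ()) = 0 := by
      rw [Fintype.sum_sum_type, Fintype.sum_sum_type] at hg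
      simp only [hG, Sum.elim_inl, Sum.elim_inr, h1, h2, zero_smul, Finset.sum_const_zero,
        zero_add] at hg
      simp only [Fintype.sum_unique] at hg
      rcases smul_eq_zero.mp hg with h | h
      · exact h
      · exact absurd h hMv
    rintro (⟨i | i⟩ | ⟨⟩)
    · exact h1 i
    · exact h2 i
    · exact h3
  have hrange : ∀ idx, G idx ∈ LinearMap.range M.mulVecLin := by
    rintro (⟨i | i⟩ | ⟨⟩)
    · exact ⟨Q.x i, by rw [mulVecLin_apply, Q.hux]; simp [hG]⟩
    · exact ⟨Q.y i, by rw [mulVecLin_apply, Q.hwy]; simp [hG]⟩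
    · exact ⟨v, by rw [mulVecLin_apply]; simp [hG]⟩
  have hspan : Submodule.span ℂ (Set.range G) ≤ LinearMap.range M.mulVecLin := by
    rw [Submodule.span_le]
    rintro _ ⟨idx, rfl⟩
    exact hrange idx
  calc 2 * k + 1 = Fintype.card ((Fin k ⊕ Fin k) ⊕ Unit) := by
        simp [Fintype.card_sum]; ring
    _ = Module.finrank ℂ (Submodule.span ℂ (Set.range G)) := (finrank_span_eq_card hli).symm
    _ ≤ Module.finrank ℂ (LinearMap.range M.mulVecLin) := Submodule.finrank_mono hspan
    _ = M.rank := rfl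

end Quads
end SOTrans

namespace SOTrans
namespace Quads
variable {N : ℕ} {M : Matrix (Fin (2 * N)) (Fin (2 * N)) ℂ} {k : ℕ} (Q : Quads N k M)

/-- Construction of a new normalized hyperbolic quadruple inside `K`. -/
lemma exists_new (hM : M.transpose = -M) (hMsq : M * M = 0)
    (hex : ∃ v, Q.inK v ∧ M *ᵥ v ≠ 0) :
    ∃ x' y' : Fin (2 * N) → ℂ,
      Q.inK x' ∧ Q.inK y' ∧ Q.inK (M *ᵥ x') ∧ Q.inK (M *ᵥ y') ∧
      x' ⬝ᵥ x' = 0 ∧ x' ⬝ᵥ y' = 0 ∧ x' ⬝ᵥ (M *ᵥ y') = 1 ∧ y' ⬝ᵥ y' = 0 ∧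
      y' ⬝ᵥ (M *ᵥ x') = -1 := by
  obtain ⟨x₀, hKx₀, hMx₀⟩ := hex
  set u₀ : Fin (2 * N) → ℂ := M *ᵥ x₀ with hu₀
  have hKu₀ : Q.inK u₀ := Q.inK_mulVec hM hMsq hKx₀
  have hy₀ : ∃ y₀, Q.inK y₀ ∧ u₀ ⬝ᵥ y₀ ≠ 0 := by
    by_contra h
    push_neg at h
    exact hMx₀ (Q.eq_zero_of_perp hKu₀ fun v hv => h v hv)
  obtain ⟨y₀, hKy₀, hc⟩ := hy₀
  set c : ℂ := u₀ ⬝ᵥ y₀ with hcdef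
  set y₁ : Fin (2 * N) → ℂ := (-c⁻¹) • y₀ with hy₁
  have hKy₁ : Q.inK y₁ := Q.inK_smul _ hKy₀
  set w₁ : Fin (2 * N) → ℂ := M *ᵥ y₁ with hw₁
  have hKw₁ : Q.inK w₁ := Q.inK_mulVec hM hMsq hKy₁
  -- pairwise dot products
  have duy : u₀ ⬝ᵥ y₁ = -1 := by
    rw [hy₁, dotProduct_smul, ← hcdef, smul_eq_mul]
    field_simp
  have dyu : y₁ ⬝ᵥ u₀ = -1 := by rw [dotProduct_comm]; exact duy
  have dxw : x₀ ⬝ᵥ w₁ = 1 := by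
    have h := skew_dot hM x₀ y₁
    rw [← hu₀, ← hw₁] at h
    linear_combination h - duy
  have dwx : w₁ ⬝ᵥ x₀ = 1 := by rw [dotProduct_comm]; exact dxw
  have dxu : x₀ ⬝ᵥ u₀ = 0 := self_dot_mulVec hM x₀
  have dux : u₀ ⬝ᵥ x₀ = 0 := by rw [dotProduct_comm]; exact dxu
  have dyw : y₁ ⬝ᵥ w₁ = 0 := self_dot_mulVec hM y₁
  have dwy : w₁ ⬝ᵥ y₁ = 0 := by rw [dotProduct_comm]; exact dyw
  have duu : u₀ ⬝ᵥ u₀ = 0 := mulVec_dot_mulVec hM hMsq x₀ x₀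
  have duw : u₀ ⬝ᵥ w₁ = 0 := mulVec_dot_mulVec hM hMsq x₀ y₁
  have dwu : w₁ ⬝ᵥ u₀ = 0 := by rw [dotProduct_comm]; exact duw
  have dww : w₁ ⬝ᵥ w₁ = 0 := mulVec_dot_mulVec hM hMsq y₁ y₁
  set α : ℂ := x₀ ⬝ᵥ x₀ with hα
  set γ : ℂ := x₀ ⬝ᵥ y₁ with hγ
  set δ : ℂ := y₁ ⬝ᵥ y₁ with hδ
  have dyx : y₁ ⬝ᵥ x₀ = γ := by rw [dotProduct_comm]
  set x' : Fin (2 * N) → ℂ := x₀ + γ • u₀ - (α / 2) • w₁ with hx'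
  set y' : Fin (2 * N) → ℂ := y₁ + (δ / 2) • u₀ with hy'
  have hMu₀ : M *ᵥ u₀ = 0 := mulVec_mulVec_zero hMsq x₀
  have hMw₁ : M *ᵥ w₁ = 0 := mulVec_mulVec_zero hMsq y₁
  have hMx' : M *ᵥ x' = u₀ := by
    simp [hx', mulVec_sub, mulVec_add, mulVec_smul, hMu₀, hMw₁, hu₀, hMsq]
  have hMy' : M *ᵥ y' = w₁ := by
    simp [hy', mulVec_add, mulVec_smul, hMu₀, hw₁]
  refine ⟨x', y', ?_, ?_, ?_, ?_, ?_, ?_, ?_, ?_, ?_⟩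
  · exact Q.inK_sub (Q.inK_add hKx₀ (Q.inK_smul _ hKu₀)) (Q.inK_smul _ hKw₁)
  · exact Q.inK_add hKy₁ (Q.inK_smul _ hKu₀)
  · rw [hMx']; exact hKu₀
  · rw [hMy']; exact hKw₁
  · rw [hx']
    simp only [dotProduct_add, add_dotProduct, dotProduct_sub, sub_dotProduct,
      dotProduct_smul, smul_dotProduct, smul_eq_mul, ← hα, ← hγ, dyx, dxu, dux, dxw, dwx,
      duy, dyu, duu, duw, dwu, dww]
    ring
  · rw [hx', hy']
    simp only [dotProduct_add, add_dotProduct, dotProduct_sub, sub_dotProduct,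
      dotProduct_smul, smul_dotProduct, smul_eq_mul, ← hγ, ← hδ, dyx, dxu, dux, dxw, dwx,
      duy, dyu, duu, duw, dwu, dww, dyw, dwy]
    ring
  · rw [hMy', hx']
    simp only [add_dotProduct, sub_dotProduct, smul_dotProduct, smul_eq_mul,
      dxw, duw, dww]
    ring
  · rw [hy']
    simp only [dotProduct_add, add_dotProduct, dotProduct_smul, smul_dotProduct,
      smul_eq_mul, ← hδ, dyu, duy, duu]
    ring
  · rw [hMx', hy']
    simp only [add_dotProduct, smul_dotProduct, smul_eq_mul, dyu, duu]
    ring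

/-- Extending a system of quadruples by a new one. -/
noncomputable def succ (hM : M.transpose = -M) (hMsq : M * M = 0)
    (x' y' : Fin (2 * N) → ℂ)
    (hKx : Q.inK x') (hKy : Q.inK y') (hKu : Q.inK (M *ᵥ x')) (hKw : Q.inK (M *ᵥ y'))
    (r1 : x' ⬝ᵥ x' = 0) (r2 : x' ⬝ᵥ y' = 0) (r3 : x' ⬝ᵥ (M *ᵥ y') = 1)
    (r4 : y' ⬝ᵥ y' = 0) (r5 : y' ⬝ᵥ (M *ᵥ x') = -1) :
    Quads N (k + 1) M where
  x := Fin.snoc Q.x x'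
  y := Fin.snoc Q.y y'
  u := Fin.snoc Q.u (M *ᵥ x')
  w := Fin.snoc Q.w (M *ᵥ y')
  hux := by
    intro j
    refine Fin.lastCases ?_ (fun j' => ?_) j <;> simp [Q.hux]
  hwy := by
    intro j
    refine Fin.lastCases ?_ (fun j' => ?_) j <;> simp [Q.hwy]
  hxx := by
    intro i j
    refine Fin.lastCases ?_ (fun i' => ?_) i <;> refine Fin.lastCases ?_ (fun j' => ?_) j
    · simpa using r1
    · simpa using dotProduct_comm (Q.x j') x' ▸ (hKx j').1
    · simpa using (hKx i').1
    · simpa using Q.hxx i' j'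
  hxy := by
    intro i j
    refine Fin.lastCases ?_ (fun i' => ?_) i <;> refine Fin.lastCases ?_ (fun j' => ?_) j
    · simpa using r2
    · simpa using dotProduct_comm (Q.y j') x' ▸ (hKx j').2.1
    · simpa using (hKy i').1
    · simpa using Q.hxy i' j'
  hxu := by
    intro i j
    refine Fin.lastCases ?_ (fun i' => ?_) i <;> refine Fin.lastCases ?_ (fun j' => ?_) j
    · simpa using self_dot_mulVec hM x'
    · simpa using dotProduct_comm (Q.u j') x' ▸ (hKx j').2.2.1
    · simpa using (hKu i').1
    · simpa using Q.hxu i' j'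
  hxw := by
    intro i j
    refine Fin.lastCases ?_ (fun i' => ?_) i <;> refine Fin.lastCases ?_ (fun j' => ?_) j
    · simpa using r3
    · simp only [Fin.snoc_last, Fin.snoc_castSucc]
      rw [if_neg (Fin.castSucc_lt_last j').ne']
      simpa using dotProduct_comm (Q.w j') x' ▸ (hKx j').2.2.2
    · simp only [Fin.snoc_last, Fin.snoc_castSucc]
      rw [if_neg (Fin.castSucc_lt_last i').ne]
      simpa using (hKw i').1
    · simp only [Fin.snoc_castSucc, Q.hxw i' j', Fin.castSucc_inj]
  hyy := by
    intro i j
    refine Fin.lastCases ?_ (fun i' => ?_) i <;> refine Fin.lastCases ?_ (fun j' => ?_) j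
    · simpa using r4
    · simpa using dotProduct_comm (Q.y j') y' ▸ (hKy j').2.1
    · simpa using (hKy i').2.1
    · simpa using Q.hyy i' j'
  hyu := by
    intro i j
    refine Fin.lastCases ?_ (fun i' => ?_) i <;> refine Fin.lastCases ?_ (fun j' => ?_) j
    · simpa using r5
    · simp only [Fin.snoc_last, Fin.snoc_castSucc]
      rw [if_neg (Fin.castSucc_lt_last j').ne']
      simpa using dotProduct_comm (Q.u j') y' ▸ (hKy j').2.2.1
    · simp only [Fin.snoc_last, Fin.snoc_castSucc]
      rw [if_neg (Fin.castSucc_lt_last i').ne]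
      simpa using (hKu i').2.1
    · simp only [Fin.snoc_castSucc, Q.hyu i' j', Fin.castSucc_inj]
  hyw := by
    intro i j
    refine Fin.lastCases ?_ (fun i' => ?_) i <;> refine Fin.lastCases ?_ (fun j' => ?_) j
    · simpa using self_dot_mulVec hM y'
    · simpa using dotProduct_comm (Q.w j') y' ▸ (hKy j').2.2.2
    · simpa using (hKw i').2.1
    · simpa using Q.hyw i' j'
  huu := by
    intro i j
    refine Fin.lastCases ?_ (fun i' => ?_) i <;> refine Fin.lastCases ?_ (fun j' => ?_) j
    · simpa using mulVec_dot_mulVec hM hMsq x' x'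
    · simpa using dotProduct_comm (Q.u j') (M *ᵥ x') ▸ (hKu j').2.2.1
    · simpa using (hKu i').2.2.1
    · simpa using Q.huu i' j'
  huw := by
    intro i j
    refine Fin.lastCases ?_ (fun i' => ?_) i <;> refine Fin.lastCases ?_ (fun j' => ?_) j
    · simpa using mulVec_dot_mulVec hM hMsq x' y'
    · simpa using dotProduct_comm (Q.w j') (M *ᵥ x') ▸ (hKu j').2.2.2
    · simpa using (hKw i').2.2.1
    · simpa using Q.huw i' j'
  hww := by
    intro i j
    refine Fin.lastCases ?_ (fun i' => ?_) i <;> refine Fin.lastCases ?_ (fun j' => ?_) j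
    · simpa using mulVec_dot_mulVec hM hMsq y' y'
    · simpa using dotProduct_comm (Q.w j') (M *ᵥ y') ▸ (hKw j').2.2.2
    · simpa using (hKw i').2.2.2
    · simpa using Q.hww i' j'

end Quads
end SOTrans

namespace SOTrans
namespace Quads
variable {N : ℕ} {M : Matrix (Fin (2 * N)) (Fin (2 * N)) ℂ}

lemma inK_sum {k m : ℕ} (Q : Quads N k M) (f : Fin m → (Fin (2 * N) → ℂ))
    (hf : ∀ i, Q.inK (f i)) : Q.inK (∑ i, f i) := by
  intro j
  refine ⟨?_, ?_, ?_, ?_⟩ <;> rw [dot_sum] <;>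
    exact Finset.sum_eq_zero fun i _ => by
      first
      | exact (hf i j).1
      | exact (hf i j).2.1
      | exact (hf i j).2.2.1
      | exact (hf i j).2.2.2

/-- Existence of `k` quadruples for every `k ≤ s`. -/
lemma exists_quads (hM : M.transpose = -M) (hMsq : M * M = 0) {s : ℕ}
    (hrank : M.rank = 2 * s) : ∀ k, k ≤ s → Nonempty (Quads N k M) := by
  intro k
  induction k with
  | zero =>
    intro _
    exact ⟨{ x := fun i => i.elim0, y := fun i => i.elim0, u := fun i => i.elim0,
             w := fun i => i.elim0,
             hux := fun i => i.elim0, hwy := fun i => i.elim0,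
             hxx := fun i => i.elim0, hxy := fun i => i.elim0, hxu := fun i => i.elim0,
             hxw := fun i => i.elim0, hyy := fun i => i.elim0, hyu := fun i => i.elim0,
             hyw := fun i => i.elim0, huu := fun i => i.elim0, huw := fun i => i.elim0,
             hww := fun i => i.elim0 }⟩
  | succ k ih =>
    intro hk
    obtain ⟨Q⟩ := ih (Nat.le_of_succ_le hk)
    have hex : ∃ v, Q.inK v ∧ M *ᵥ v ≠ 0 := by
      by_contra h
      push_neg at h
      have := Q.rank_le_of_MK_zero hMsq fun v hv => h v hv
      omega
    obtain ⟨x', y', hKx, hKy, hKu, hKw, r1, r2, r3, r4, r5⟩ := Q.exists_new hM hMsq hex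
    exact ⟨Q.succ hM hMsq x' y' hKx hKy hKu hKw r1 r2 r3 r4 r5⟩

/-- When we have `s` quadruples and the rank is `2s`, `M` kills the complement. -/
lemma MK_zero (hM : M.transpose = -M) (hMsq : M * M = 0) {s : ℕ}
    (hrank : M.rank = 2 * s) (Q : Quads N s M) :
    ∀ v, Q.inK v → M *ᵥ v = 0 := by
  intro v hv
  by_contra h
  have := Q.rank_ge_of_exists hM hMsq hv h
  omega

section Phase2

variable {s : ℕ} (Q : Quads N s M)

/-- Extended orthogonality: in `K` and orthogonal to the z family. -/
def inK2 {m : ℕ} (z : Fin m → (Fin (2 * N) → ℂ)) (v : Fin (2 * N) → ℂ) : Prop :=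
  Q.inK v ∧ ∀ i, z i ⬝ᵥ v = 0

lemma inK2_sub_proj2 {m : ℕ} (z : Fin m → (Fin (2 * N) → ℂ))
    (hKz : ∀ i, Q.inK (z i)) (hzz : ∀ i j, z i ⬝ᵥ z j = if i = j then 1 else 0)
    (t : Fin (2 * N) → ℂ) :
    Q.inK2 z ((t - Q.proj t) - ∑ i, ((z i ⬝ᵥ (t - Q.proj t)) • z i)) := by
  constructor
  · exact Q.inK_sub (Q.inK_sub_proj t)
      (Q.inK_sum _ fun i => Q.inK_smul _ (hKz i))
  · intro i
    rw [dotProduct_sub, dot_sum]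
    have hterm : ∀ j, z i ⬝ᵥ ((z j ⬝ᵥ (t - Q.proj t)) • z j)
        = if i = j then z j ⬝ᵥ (t - Q.proj t) else 0 := by
      intro j
      rw [dotProduct_smul, smul_eq_mul, hzz i j]
      by_cases h : i = j <;> simp [h]
    rw [Finset.sum_congr rfl fun j _ => hterm j, Finset.sum_ite_eq,
      if_pos (Finset.mem_univ i)]
    ring

lemma eq_zero_of_perp2 {m : ℕ} (z : Fin m → (Fin (2 * N) → ℂ))
    (hKz : ∀ i, Q.inK (z i)) (hzz : ∀ i j, z i ⬝ᵥ z j = if i = j then 1 else 0)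
    {v : Fin (2 * N) → ℂ} (hv : Q.inK2 z v)
    (hperp : ∀ t, Q.inK2 z t → v ⬝ᵥ t = 0) : v = 0 := by
  funext i
  set t := (Pi.single i 1 : Fin (2 * N) → ℂ) with ht
  have h0 := hperp _ (Q.inK2_sub_proj2 z hKz hzz t)
  rw [dotProduct_sub, sub_eq_zero] at h0
  have h1 : v ⬝ᵥ ∑ j, ((z j ⬝ᵥ (t - Q.proj t)) • z j) = 0 := by
    rw [dot_sum]
    refine Finset.sum_eq_zero fun j _ => ?_
    rw [dotProduct_smul, smul_eq_mul, dotProduct_comm v (z j), hv.2 j, mul_zero]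
  have h2 : v ⬝ᵥ (t - Q.proj t) = 0 := by rw [h0, h1]
  have h3 := Q.dot_eq_zero_of_perp hv.1 t h2
  rw [ht, dotProduct_single, mul_one] at h3
  exact h3

/-- Existence of a nonzero vector orthogonal to everything so far. -/
lemma exists_nonzero_inK2 {m : ℕ} (z : Fin m → (Fin (2 * N) → ℂ))
    (hcard : 4 * s + m < 2 * N) :
    ∃ v, Q.inK2 z v ∧ v ≠ 0 := by
  classical
  set G : (((Fin s ⊕ Fin s) ⊕ (Fin s ⊕ Fin s)) ⊕ Fin m) → (Fin (2 * N) → ℂ) :=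
    Sum.elim (Sum.elim (Sum.elim Q.x Q.y) (Sum.elim Q.u Q.w)) z with hG
  set A : Matrix (((Fin s ⊕ Fin s) ⊕ (Fin s ⊕ Fin s)) ⊕ Fin m) (Fin (2 * N)) ℂ :=
    Matrix.of G with hA
  have hker : LinearMap.ker A.mulVecLin ≠ ⊥ := by
    intro hbot
    have hinj := LinearMap.ker_eq_bot.mp hbot
    have hle := LinearMap.finrank_le_finrank_of_injective hinj
    rw [Module.finrank_fintype_fun_eq_card, Module.finrank_fintype_fun_eq_card] at hle
    simp [Fintype.card_sum] at hle
    omega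
  obtain ⟨v, hvker, hvne⟩ := Submodule.exists_mem_ne_zero_of_ne_bot hker
  have hdots : ∀ idx, G idx ⬝ᵥ v = 0 := by
    intro idx
    have := congrFun (LinearMap.mem_ker.mp hvker) idx
    simpa [hA, Matrix.mulVec, dotProduct] using this
  refine ⟨v, ⟨fun j => ⟨hdots (Sum.inl (Sum.inl (Sum.inl j))),
    hdots (Sum.inl (Sum.inl (Sum.inr j))),
    hdots (Sum.inl (Sum.inr (Sum.inl j))),
    hdots (Sum.inl (Sum.inr (Sum.inr j)))⟩, fun i => hdots (Sum.inr i)⟩, hvne⟩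

/-- Existence of a vector of nonzero square length orthogonal to everything so far. -/
lemma exists_norm_one_inK2 {m : ℕ} (z : Fin m → (Fin (2 * N) → ℂ))
    (hKz : ∀ i, Q.inK (z i)) (hzz : ∀ i j, z i ⬝ᵥ z j = if i = j then 1 else 0)
    (hcard : 4 * s + m < 2 * N) :
    ∃ v, Q.inK2 z v ∧ v ⬝ᵥ v = 1 := by
  obtain ⟨v, hvK, hvne⟩ := Q.exists_nonzero_inK2 z hcard
  have : ∃ vec, Q.inK2 z vec ∧ vec ⬝ᵥ vec ≠ 0 := by
    by_cases hvv : v ⬝ᵥ v ≠ 0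
    · exact ⟨v, hvK, hvv⟩
    push_neg at hvv
    have : ∃ v', Q.inK2 z v' ∧ v ⬝ᵥ v' ≠ 0 := by
      by_contra h
      push_neg at h
      exact hvne (Q.eq_zero_of_perp2 z hKz hzz hvK h)
    obtain ⟨v', hv'K, hvv'⟩ := this
    by_cases hv'v' : v' ⬝ᵥ v' ≠ 0
    · exact ⟨v', hv'K, hv'v'⟩
    push_neg at hv'v'
    refine ⟨v + v', ⟨Q.inK_add hvK.1 hv'K.1, fun i => ?_⟩, ?_⟩
    · rw [dotProduct_add, hvK.2 i, hv'K.2 i, add_zero]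
    · rw [dotProduct_add, add_dotProduct, add_dotProduct, hvv, hv'v',
        dotProduct_comm v' v]
      intro hcon
      apply hvv'
      have : (2 : ℂ) * (v ⬝ᵥ v') = 0 := by linear_combination hcon
      simpa using this
  obtain ⟨vec, hvecK, hvec⟩ := this
  obtain ⟨t, ht⟩ := IsAlgClosed.exists_pow_nat_eq (vec ⬝ᵥ vec) (n := 2) (by norm_num)
  have htne : t ≠ 0 := by
    intro h
    rw [h] at ht
    simp at ht
    exact hvec ht.symm
  refine ⟨t⁻¹ • vec, ⟨Q.inK_smul _ hvecK.1, fun i => ?_⟩, ?_⟩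
  · rw [dotProduct_smul, hvecK.2 i, smul_zero]
  · rw [smul_dotProduct, dotProduct_smul, smul_eq_mul, smul_eq_mul, ← ht]
    field_simp

end Phase2
end Quads
end SOTrans

namespace SOTrans
namespace Quads
variable {N : ℕ} {M : Matrix (Fin (2 * N)) (Fin (2 * N)) ℂ} {s : ℕ} (Q : Quads N s M)

lemma exists_zfam : ∀ m, 4 * s + m ≤ 2 * N →
    ∃ z : Fin m → (Fin (2 * N) → ℂ),
      (∀ i, Q.inK (z i)) ∧ (∀ i j, z i ⬝ᵥ z j = if i = j then 1 else 0) := by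
  intro m
  induction m with
  | zero => exact fun _ => ⟨fun i => i.elim0, fun i => i.elim0, fun i => i.elim0⟩
  | succ m ih =>
    intro hm
    obtain ⟨z, hKz, hzz⟩ := ih (by omega)
    obtain ⟨v, hvK, hvv⟩ := Q.exists_norm_one_inK2 z hKz hzz (by omega)
    refine ⟨Fin.snoc z v, ?_, ?_⟩
    · intro i
      refine Fin.lastCases ?_ (fun i' => ?_) i
      · simpa using hvK.1
      · simpa using hKz i'
    · intro i j
      refine Fin.lastCases ?_ (fun i' => ?_) i <;> refine Fin.lastCases ?_ (fun j' => ?_) j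
      · simpa using hvv
      · simp only [Fin.snoc_last, Fin.snoc_castSucc]
        rw [if_neg (Fin.castSucc_lt_last j').ne']
        rw [dotProduct_comm]
        exact hvK.2 j'
      · simp only [Fin.snoc_last, Fin.snoc_castSucc]
        rw [if_neg (Fin.castSucc_lt_last i').ne]
        exact hvK.2 i'
      · simp only [Fin.snoc_castSucc, hzz i' j', Fin.castSucc_inj]

end Quads
end SOTrans

namespace SOTrans

/-- index type for the adapted basis -/
abbrev QIdx (s m : ℕ) := ((Fin s ⊕ Fin s) ⊕ (Fin s ⊕ Fin s)) ⊕ Fin m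

def qEquiv (N s m : ℕ) (h : 4 * s + m = 2 * N) : QIdx s m ≃ Fin (2 * N) :=
  ((Equiv.sumCongr (Equiv.sumCongr finSumFinEquiv finSumFinEquiv) (Equiv.refl (Fin m))).trans
    ((Equiv.sumCongr finSumFinEquiv (Equiv.refl (Fin m))).trans
      (finSumFinEquiv.trans (finCongr (by omega)))))

/-- entries of the canonical form -/
noncomputable def canonEntry (s m : ℕ) : QIdx s m → QIdx s m → ℂ := fun p q =>
  match p, q with
  | .inl (.inl (.inl i)), .inl (.inr (.inl j)) => if i = j then 1/2 else 0
  | .inl (.inl (.inl i)), .inl (.inr (.inr j)) => if i = j then Complex.I/2 else 0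
  | .inl (.inl (.inr i)), .inl (.inr (.inl j)) => if i = j then Complex.I/2 else 0
  | .inl (.inl (.inr i)), .inl (.inr (.inr j)) => if i = j then -(1/2) else 0
  | .inl (.inr (.inl i)), .inl (.inl (.inl j)) => if i = j then -(1/2) else 0
  | .inl (.inr (.inl i)), .inl (.inl (.inr j)) => if i = j then -(Complex.I/2) else 0
  | .inl (.inr (.inr i)), .inl (.inl (.inl j)) => if i = j then -(Complex.I/2) else 0
  | .inl (.inr (.inr i)), .inl (.inl (.inr j)) => if i = j then 1/2 else 0
  | _, _ => 0

/-- the canonical square-zero antisymmetric matrix of rank 2s -/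
noncomputable def canonC (N s m : ℕ) (h : 4 * s + m = 2 * N) :
    Matrix (Fin (2 * N)) (Fin (2 * N)) ℂ :=
  Matrix.of fun i j => canonEntry s m ((qEquiv N s m h).symm i) ((qEquiv N s m h).symm j)

variable {N : ℕ} {M : Matrix (Fin (2 * N)) (Fin (2 * N)) ℂ}

theorem exists_P (hM : M.transpose = -M) (hMsq : M * M = 0) {s m : ℕ}
    (h : 4 * s + m = 2 * N) (hrank : M.rank = 2 * s) :
    ∃ P : Matrix (Fin (2 * N)) (Fin (2 * N)) ℂ,
      P.transpose * P = 1 ∧ P * P.transpose = 1 ∧ M = P * canonC N s m h * P.transpose := by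
  classical
  obtain ⟨Q⟩ := Quads.exists_quads hM hMsq hrank s le_rfl
  have hMK := Quads.MK_zero hM hMsq hrank Q
  obtain ⟨z, hKz, hzz⟩ := Q.exists_zfam m (by omega)
  obtain ⟨μ, hμ⟩ := IsAlgClosed.exists_pow_nat_eq ((2 : ℂ)⁻¹) (n := 2) (by norm_num)
  set a : Fin s → (Fin (2 * N) → ℂ) := fun j => μ • (Q.x j + Q.w j) with ha
  set b : Fin s → (Fin (2 * N) → ℂ) := fun j => (μ * Complex.I) • (Q.x j - Q.w j) with hb
  set c : Fin s → (Fin (2 * N) → ℂ) := fun j => μ • (Q.y j - Q.u j) with hc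
  set d : Fin s → (Fin (2 * N) → ℂ) := fun j => (μ * Complex.I) • (Q.y j + Q.u j) with hd
  set F : QIdx s m → (Fin (2 * N) → ℂ) :=
    Sum.elim (Sum.elim (Sum.elim a b) (Sum.elim c d)) z with hF
  -- z dot products with the quadruple vectors
  have hzx : ∀ i j, z i ⬝ᵥ Q.x j = 0 := fun i j => by
    rw [dotProduct_comm]; exact (hKz i j).1
  have hzy : ∀ i j, z i ⬝ᵥ Q.y j = 0 := fun i j => by
    rw [dotProduct_comm]; exact (hKz i j).2.1
  have hzu : ∀ i j, z i ⬝ᵥ Q.u j = 0 := fun i j => by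
    rw [dotProduct_comm]; exact (hKz i j).2.2.1
  have hzw : ∀ i j, z i ⬝ᵥ Q.w j = 0 := fun i j => by
    rw [dotProduct_comm]; exact (hKz i j).2.2.2
  have hxz : ∀ j i, Q.x j ⬝ᵥ z i = 0 := fun j i => (hKz i j).1
  have hyz : ∀ j i, Q.y j ⬝ᵥ z i = 0 := fun j i => (hKz i j).2.1
  have huz : ∀ j i, Q.u j ⬝ᵥ z i = 0 := fun j i => (hKz i j).2.2.1
  have hwz : ∀ j i, Q.w j ⬝ᵥ z i = 0 := fun j i => (hKz i j).2.2.2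
  have hON : ∀ p q, F p ⬝ᵥ F q = if p = q then 1 else 0 := by
    rintro (((i|i)|(i|i))|i) (((j|j)|(j|j))|j) <;>
      simp only [hF, ha, hb, hc, hd, Sum.elim_inl, Sum.elim_inr, smul_dotProduct,
        dotProduct_smul, dotProduct_add, add_dotProduct, dotProduct_sub, sub_dotProduct,
        smul_eq_mul, Q.hxx, Q.hxy, Q.hxu, Q.hxw, Q.hyx, Q.hyy, Q.hyu, Q.hyw, Q.hux',
        Q.huy, Q.huu, Q.huw, Q.hwx, Q.hwy', Q.hwu, Q.hww, hzx, hzy, hzu, hzw, hxz, hyz,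
        huz, hwz, hzz, Sum.inl.injEq, Sum.inr.injEq] <;>
      first
        | (simp; done)
        | (rcases eq_or_ne i j with hij | hij <;> simp [hij] <;>
            first
              | ring1
              | linear_combination 2 * hμ
              | linear_combination (-2 * μ^2) * Complex.I_mul_I + 2 * hμ
              | linear_combination 2 * μ^2 * Complex.I_mul_I - 2 * hμ)
  have hI3 : Complex.I ^ 3 = -Complex.I := by
    rw [pow_succ, Complex.I_sq]; ring
  have hACT : ∀ q, M *ᵥ F q = ∑ p, canonEntry s m p q • F p := by
    rintro (((j|j)|(j|j))|j) <;>
      simp only [hF, ha, hb, hc, hd, Sum.elim_inl, Sum.elim_inr, mulVec_smul, mulVec_add,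
        mulVec_sub, Q.hux, Q.hwy, Q.hMu hMsq, Q.hMw hMsq, add_zero, sub_zero,
        Fintype.sum_sum_type, canonEntry, ite_smul, zero_smul, Finset.sum_ite_eq',
        Finset.mem_univ, if_true, Finset.sum_const_zero, add_zero, zero_add] <;>
      first
        | (rw [hMK _ (hKz j)]; try simp)
        | (funext t
           simp only [Pi.smul_apply, Pi.add_apply, Pi.sub_apply, smul_eq_mul]
           ring_nf
           try simp only [Complex.I_sq, hI3]
           try ring1)
  -- assemble the orthogonal matrix P
  set e := qEquiv N s m h with he
  set P : Matrix (Fin (2 * N)) (Fin (2 * N)) ℂ :=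
    Matrix.of (fun i jj => F (e.symm jj) i) with hP
  have hdot : ∀ i j, (P.transpose * P) i j = F (e.symm i) ⬝ᵥ F (e.symm j) := by
    intro i j
    rw [Matrix.mul_apply]
    rfl
  have h1 : P.transpose * P = 1 := by
    ext i j
    rw [hdot, hON, Matrix.one_apply]
    simp [EmbeddingLike.apply_eq_iff_eq]
  have h2 : P * P.transpose = 1 := mul_eq_one_comm.mp h1
  have hMP : M * P = P * canonC N s m h := by
    ext i j
    rw [Matrix.mul_apply, Matrix.mul_apply]
    have lhs : ∑ k, M i k * P k j = (M *ᵥ F (e.symm j)) i := rfl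
    rw [lhs, hACT (e.symm j)]
    rw [Finset.sum_apply]
    refine Fintype.sum_equiv e _ _ fun p => ?_
    simp only [hP, canonC, Matrix.of_apply, Pi.smul_apply, smul_eq_mul,
      Equiv.symm_apply_apply, he]
    ring
  refine ⟨P, h1, h2, ?_⟩
  calc M = M * (P * P.transpose) := by rw [h2, Matrix.mul_one]
    _ = (M * P) * P.transpose := by rw [Matrix.mul_assoc]
    _ = P * canonC N s m h * P.transpose := by rw [hMP]


end SOTrans

namespace SOTrans

lemma canonEntry_inr_right (s m : ℕ) (p : QIdx s m) (t : Fin m) :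
    canonEntry s m p (Sum.inr t) = 0 := by
  rcases p with (((a|a)|(a|a))|a) <;> rfl

lemma canonEntry_inr_left (s m : ℕ) (p : QIdx s m) (t : Fin m) :
    canonEntry s m (Sum.inr t) p = 0 := by
  rcases p with (((a|a)|(a|a))|a) <;> rfl

lemma conj_lemma {n : ℕ} (P P' E C M M' : Matrix (Fin n) (Fin n) ℂ)
    (hP2 : P * P.transpose = 1) (hP'1 : P'.transpose * P' = 1)
    (hET : E.transpose = E) (hEE : E * E = 1) (hECE : E * C * E = C)
    (hPC : P.transpose * M * P = C) (hP'C : M' = P' * C * P'.transpose) :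
    (P' * E * P.transpose).transpose * (P' * E * P.transpose) = 1 ∧
      M' = (P' * E * P.transpose) * M * (P' * E * P.transpose).transpose := by
  have hcP' : ∀ X, P'.transpose * (P' * X) = X := fun X => by
    rw [← Matrix.mul_assoc, hP'1, Matrix.one_mul]
  have hE2 : ∀ X, E * (E * X) = X := fun X => by
    rw [← Matrix.mul_assoc, hEE, Matrix.one_mul]
  have hmid : ∀ X, P.transpose * (M * (P * X)) = C * X := fun X => by
    rw [← Matrix.mul_assoc, ← Matrix.mul_assoc, hPC]
  have hmid2 : ∀ X, E * (C * (E * X)) = C * X := fun X => by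
    rw [← Matrix.mul_assoc, ← Matrix.mul_assoc, hECE]
  constructor
  · simp only [Matrix.transpose_mul, Matrix.transpose_transpose, Matrix.mul_assoc, hET]
    rw [hcP', hE2]
    exact hP2
  · simp only [Matrix.transpose_mul, Matrix.transpose_transpose, Matrix.mul_assoc, hET]
    rw [hmid, hmid2, hP'C, Matrix.mul_assoc]

end SOTrans

/-- `SO(2N, ℂ)` acts transitively (via `M ↦ g M gᵗ`) on square-zero antisymmetric complex
`2N × 2N` matrices of any fixed even rank `r < N`. -/
theorem special_orthogonal_transitive_on_sq_zero_antisymm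
    (N r : ℕ) (hr : Even r) (hrN : r < N)
    (M M' : Matrix (Fin (2 * N)) (Fin (2 * N)) ℂ)
    (hM : M.transpose = -M) (hMsq : M * M = 0) (hMr : M.rank = r)
    (hM' : M'.transpose = -M') (hM'sq : M' * M' = 0) (hM'r : M'.rank = r) :
    ∃ g : Matrix (Fin (2 * N)) (Fin (2 * N)) ℂ,
      g.transpose * g = 1 ∧ g.det = 1 ∧ M' = g * M * g.transpose := by
  classical
  obtain ⟨s, hs⟩ := hr
  have h4s : 4 * s + (2 * N - 4 * s) = 2 * N := by omega
  have hrank : M.rank = 2 * s := by rw [hMr, hs]; ring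
  have hrank' : M'.rank = 2 * s := by rw [hM'r, hs]; ring
  obtain ⟨P, hP1, hP2, hPCeq⟩ := SOTrans.exists_P hM hMsq h4s hrank
  obtain ⟨P', hP'1, hP'2, hP'Ceq⟩ := SOTrans.exists_P hM' hM'sq h4s hrank'
  set C := SOTrans.canonC N s (2 * N - 4 * s) h4s with hC
  have hcP : ∀ X, P.transpose * (P * X) = X := fun X => by
    rw [← Matrix.mul_assoc, hP1, Matrix.one_mul]
  have hPC' : P.transpose * M * P = C := by
    rw [hPCeq]
    simp only [Matrix.mul_assoc]
    rw [hcP, hP1, Matrix.mul_one]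
  -- determinants are ±1
  have hdP : P.det = 1 ∨ P.det = -1 := by
    have hh : (P.transpose * P).det = 1 := by rw [hP1, Matrix.det_one]
    rw [Matrix.det_mul, Matrix.det_transpose] at hh
    exact mul_self_eq_one_iff.mp hh
  have hdP' : P'.det = 1 ∨ P'.det = -1 := by
    have hh : (P'.transpose * P').det = 1 := by rw [hP'1, Matrix.det_one]
    rw [Matrix.det_mul, Matrix.det_transpose] at hh
    exact mul_self_eq_one_iff.mp hh
  -- the sign-fixing reflection
  have hm0 : 0 < 2 * N - 4 * s := by omega
  set j0 : Fin (2 * N) := SOTrans.qEquiv N s (2 * N - 4 * s) h4s (Sum.inr ⟨0, hm0⟩) with hj0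
  have hsymm : (SOTrans.qEquiv N s (2 * N - 4 * s) h4s).symm j0 = Sum.inr ⟨0, hm0⟩ :=
    Equiv.symm_apply_apply _ _
  have hC0c : ∀ i, C i j0 = 0 := fun i => by
    show SOTrans.canonEntry s (2 * N - 4 * s) _ _ = 0
    rw [hsymm]
    exact SOTrans.canonEntry_inr_right _ _ _ _
  have hC0r : ∀ i, C j0 i = 0 := fun i => by
    show SOTrans.canonEntry s (2 * N - 4 * s) _ _ = 0
    rw [hsymm]
    exact SOTrans.canonEntry_inr_left _ _ _ _
  set D : Matrix (Fin (2 * N)) (Fin (2 * N)) ℂ :=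
    Matrix.diagonal (fun i => if i = j0 then (-1 : ℂ) else 1) with hD
  have hDT : D.transpose = D := Matrix.diagonal_transpose _
  have hDD : D * D = 1 := by
    have hfun : (fun i => (if i = j0 then (-1 : ℂ) else 1) * (if i = j0 then (-1 : ℂ) else 1))
        = fun _ => (1 : ℂ) := funext fun i => by by_cases hi : i = j0 <;> simp [hi]
    rw [hD, Matrix.diagonal_mul_diagonal, hfun, Matrix.diagonal_one]
  have hDCD : D * C * D = C := by
    ext i j
    rw [Matrix.mul_diagonal, Matrix.diagonal_mul]
    by_cases hi : i = j0
    · rw [hi, hC0r j]; ring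
    · by_cases hj : j = j0
      · rw [hj, hC0c i]; ring
      · simp [hi, hj]
  have hdetD : D.det = -1 := by
    rw [hD, Matrix.det_diagonal, Finset.prod_ite_eq']
    simp
  rcases hdP with h | h <;> rcases hdP' with h' | h'
  · obtain ⟨hg1, hg2⟩ := SOTrans.conj_lemma P P' 1 C M M' hP2 hP'1 Matrix.transpose_one
      (by simp) (by simp) hPC' hP'Ceq
    exact ⟨P' * 1 * P.transpose, hg1, by
      simp [Matrix.det_mul, Matrix.det_transpose, h, h'], hg2⟩
  · obtain ⟨hg1, hg2⟩ := SOTrans.conj_lemma P P' D C M M' hP2 hP'1 hDT hDD hDCD hPC' hP'Ceq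
    exact ⟨P' * D * P.transpose, hg1, by
      simp [Matrix.det_mul, Matrix.det_transpose, h, h', hdetD], hg2⟩
  · obtain ⟨hg1, hg2⟩ := SOTrans.conj_lemma P P' D C M M' hP2 hP'1 hDT hDD hDCD hPC' hP'Ceq
    exact ⟨P' * D * P.transpose, hg1, by
      simp [Matrix.det_mul, Matrix.det_transpose, h, h', hdetD], hg2⟩
  · obtain ⟨hg1, hg2⟩ := SOTrans.conj_lemma P P' 1 C M M' hP2 hP'1 Matrix.transpose_one
      (by simp) (by simp) hPC' hP'Ceq
    exact ⟨P' * 1 * P.transpose, hg1, by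
      simp [Matrix.det_mul, Matrix.det_transpose, h, h'], hg2⟩
end
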